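/- Let $\mu$ be a Borel measure positive and finite on all dyadic intervals, and suppose that the shift $T f = \sum_{I\in\mathcal{D}} \langle f, h_I\rangle h_{I_-}$ satisfies $\|T h_I\|_{\mathrm{BMO}} \lesssim \|h_I\|_{\mathrm{BMO}}$ uniformly over dyadic intervals $I$ (and similarly for the analogous shifts onto $I_+$ and onto the parent). Then $\mu$ is balanced: $m(I) \sim m(\widehat{I})$ uniformly, where $m(I)=\min\{\mu(I_-),\mu(I_+)\}$. The key computation is that $\|h_I\|_{\mathrm{BMO}(\mu)} \sim m(I)^{-1/2}$. -/

import Mathlib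

open MeasureTheory Set

noncomputable section

/-- The dyadic interval `[l·2^{-k}, (l+1)·2^{-k})`. -/
def dyadicI (k l : ℤ) : Set ℝ :=
  Set.Ico ((l : ℝ) * (2 : ℝ) ^ (-k)) (((l : ℝ) + 1) * (2 : ℝ) ^ (-k))

/-- A dyadic interval indexed by a pair `(generation, position)`. -/
def dI (p : ℤ × ℤ) : Set ℝ := dyadicI p.1 p.2

/-- Left child. -/
def leftCh (p : ℤ × ℤ) : ℤ × ℤ := (p.1 + 1, 2 * p.2)

/-- Right child. -/
def rightCh (p : ℤ × ℤ) : ℤ × ℤ := (p.1 + 1, 2 * p.2 + 1)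

/-- Dyadic parent. -/
def par (p : ℤ × ℤ) : ℤ × ℤ := (p.1 - 1, Int.fdiv p.2 2)

/-- `t`-th dyadic ancestor. -/
def anc (t : ℕ) (p : ℤ × ℤ) : ℤ × ℤ := par^[t] p

/-- The measure `μ` is positive and finite on all dyadic intervals. -/
def posFin (μ : Measure ℝ) : Prop := ∀ p : ℤ × ℤ, 0 < μ (dI p) ∧ μ (dI p) < ⊤

/-- The `μ`-average of `f` over a set `S`. -/
def avg (μ : Measure ℝ) (f : ℝ → ℝ) (S : Set ℝ) : ℝ :=
  (∫ x in S, f x ∂μ) / (μ S).toReal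

/-- The `μ`-adapted Haar function of the dyadic interval indexed by `p`. -/
def haar (μ : Measure ℝ) (p : ℤ × ℤ) : ℝ → ℝ := fun x =>
  Real.sqrt ((μ (dI (leftCh p))).toReal * (μ (dI (rightCh p))).toReal / (μ (dI p)).toReal) *
    ((dI (leftCh p)).indicator (fun _ => ((μ (dI (leftCh p))).toReal)⁻¹) x -
      (dI (rightCh p)).indicator (fun _ => ((μ (dI (rightCh p))).toReal)⁻¹) x)

/-- `m(I) = min(μ(I₋), μ(I₊))`. -/
def mval (μ : Measure ℝ) (p : ℤ × ℤ) : ℝ :=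
  min (μ (dI (leftCh p))).toReal (μ (dI (rightCh p))).toReal

/-- The dyadic martingale BMO oscillation of `f` over the dyadic interval `p`:
`(μ(J)⁻¹ ∫_J |f - ⟨f⟩_{Ĵ}|² dμ)^{1/2}`. -/
def osc (μ : Measure ℝ) (f : ℝ → ℝ) (p : ℤ × ℤ) : ℝ :=
  Real.sqrt (((μ (dI p)).toReal)⁻¹ * ∫ x in dI p, (f x - avg μ f (dI (par p))) ^ 2 ∂μ)

/-- The dyadic martingale `BMO(μ)` norm (as an extended real):
`sup_J (μ(J)⁻¹ ∫_J |f - ⟨f⟩_{Ĵ}|² dμ)^{1/2}`. -/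
def bmoNorm (μ : Measure ℝ) (f : ℝ → ℝ) : ENNReal :=
  ⨆ p : ℤ × ℤ, ENNReal.ofReal (osc μ f p)


/-!
On the children of `I` the Haar function `h_I` is constant, equal to `c / μ(I₋)` and
`-c / μ(I₊)`, where `c² = μ(I₋) μ(I₊) / μ(I)` lies between `m(I) / 2` and `m(I)`; and `h_I` has
mean zero on `I`. Hence `|h_I| ≤ m(I)^{-1/2}` everywhere, so every oscillation, and therefore
`‖h_I‖_BMO`, is at most `2 m(I)^{-1/2}`; while the oscillation over the lighter child of `I`
is `c / m(I) ≥ m(I)^{-1/2} / 2`. With `‖h_I‖_BMO ∼ m(I)^{-1/2}`, the bounded shift `h_I ↦ h_Î`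
gives `m(I) ≲ m(Î)`, and the shift from `Î` onto its child `I` gives `m(Î) ≲ m(I)`.
-/

lemma mul_div_add_le_min {a b : ℝ} (ha : 0 < a) (hb : 0 < b) : a * b / (a + b) ≤ min a b := by
  rw [div_le_iff₀ (by positivity)]
  rcases le_total a b with h | h
  · rw [min_eq_left h]; nlinarith
  · rw [min_eq_right h]; nlinarith

lemma min_div_two_le_mul_div_add {a b : ℝ} (ha : 0 < a) (hb : 0 < b) :
    min a b / 2 ≤ a * b / (a + b) := by
  rw [div_le_div_iff₀ two_pos (by positivity)]
  rcases le_total a b with h | h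
  · rw [min_eq_left h]; nlinarith
  · rw [min_eq_right h]; nlinarith

lemma measurableSet_dI (p : ℤ × ℤ) : MeasurableSet (dI p) := measurableSet_Ico

lemma par_leftCh (p : ℤ × ℤ) : par (leftCh p) = p := by
  ext
  · simp [par, leftCh]
  · simp only [par, leftCh]
    rw [Int.fdiv_eq_ediv_of_nonneg _ two_pos.le]
    omega

lemma par_rightCh (p : ℤ × ℤ) : par (rightCh p) = p := by
  ext
  · simp [par, rightCh]
  · simp only [par, rightCh]
    rw [Int.fdiv_eq_ediv_of_nonneg _ two_pos.le]
    omega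

lemma eq_leftCh_par_or_eq_rightCh_par (p : ℤ × ℤ) :
    p = leftCh (par p) ∨ p = rightCh (par p) := by
  simp only [par, leftCh, rightCh, Prod.ext_iff, sub_add_cancel, true_and]
  rw [Int.fdiv_eq_ediv_of_nonneg _ two_pos.le]
  omega

lemma dI_leftCh_union_dI_rightCh (p : ℤ × ℤ) : dI (leftCh p) ∪ dI (rightCh p) = dI p := by
  obtain ⟨k, l⟩ := p
  have hscale : (2 : ℝ) ^ (-k) = 2 * 2 ^ (-(k + 1)) := by
    rw [show -k = 1 + -(k + 1) by ring, zpow_add₀ two_ne_zero, zpow_one]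
  have ht : (0 : ℝ) < 2 ^ (-(k + 1)) := zpow_pos two_pos _
  simp only [dI, leftCh, rightCh, dyadicI, hscale]
  push_cast
  rw [show (2 * l : ℝ) * 2 ^ (-(k + 1)) = l * (2 * 2 ^ (-(k + 1))) by ring,
    show (2 * l + 1 + 1 : ℝ) * 2 ^ (-(k + 1)) = (l + 1) * (2 * 2 ^ (-(k + 1))) by ring]
  exact Set.Ico_union_Ico_eq_Ico (by nlinarith) (by nlinarith)

lemma disjoint_dI_leftCh_dI_rightCh (p : ℤ × ℤ) : Disjoint (dI (leftCh p)) (dI (rightCh p)) := by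
  simp only [dI, leftCh, rightCh, dyadicI]
  push_cast
  exact Set.Ico_disjoint_Ico_same

lemma dI_leftCh_subset (p : ℤ × ℤ) : dI (leftCh p) ⊆ dI p :=
  dI_leftCh_union_dI_rightCh p ▸ Set.subset_union_left

lemma dI_rightCh_subset (p : ℤ × ℤ) : dI (rightCh p) ⊆ dI p :=
  dI_leftCh_union_dI_rightCh p ▸ Set.subset_union_right

section Averages

variable {μ : Measure ℝ} {f : ℝ → ℝ} {C : ℝ}

lemma abs_avg_le_of_abs_le (hf : ∀ x, |f x| ≤ C) (S : Set ℝ) : |avg μ f S| ≤ C := by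
  have hC : 0 ≤ C := (abs_nonneg _).trans (hf 0)
  rcases eq_or_ne (μ S).toReal 0 with hS | hS
  · simpa [avg, hS] using hC
  have hfin : μ S < ⊤ := (ENNReal.toReal_ne_zero.1 hS).2.lt_top
  have hpos : 0 < (μ S).toReal := ENNReal.toReal_nonneg.lt_of_ne hS.symm
  rw [avg, abs_div, abs_of_pos hpos, div_le_iff₀ hpos]
  exact norm_setIntegral_le_of_norm_le_const hfin fun x _ => (Real.norm_eq_abs _).trans_le (hf x)

lemma osc_eq_sqrt_avg (f : ℝ → ℝ) (p : ℤ × ℤ) :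
    osc μ f p = √(avg μ (fun x => (f x - avg μ f (dI (par p))) ^ 2) (dI p)) := by
  simp only [osc, avg, div_eq_inv_mul]

lemma osc_le_of_abs_le (hf : ∀ x, |f x| ≤ C) (p : ℤ × ℤ) : osc μ f p ≤ 2 * C := by
  have hC : 0 ≤ C := (abs_nonneg _).trans (hf 0)
  have hdev : ∀ x, |(f x - avg μ f (dI (par p))) ^ 2| ≤ (2 * C) ^ 2 := fun x => by
    rw [abs_of_nonneg (sq_nonneg _), ← sq_abs]
    have hsub := abs_sub (f x) (avg μ f (dI (par p)))
    have havg := abs_avg_le_of_abs_le (μ := μ) hf (dI (par p))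
    gcongr
    linarith [hf x]
  calc osc μ f p ≤ √((2 * C) ^ 2) := by
        rw [osc_eq_sqrt_avg]
        exact Real.sqrt_le_sqrt ((le_abs_self _).trans (abs_avg_le_of_abs_le hdev _))
    _ = 2 * C := Real.sqrt_sq (by positivity)

lemma ofReal_osc_le_bmoNorm (f : ℝ → ℝ) (p : ℤ × ℤ) :
    ENNReal.ofReal (osc μ f p) ≤ bmoNorm μ f :=
  le_iSup (fun q => ENNReal.ofReal (osc μ f q)) p

lemma bmoNorm_le_of_abs_le (hf : ∀ x, |f x| ≤ C) : bmoNorm μ f ≤ ENNReal.ofReal (2 * C) :=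
  iSup_le fun p => ENNReal.ofReal_le_ofReal (osc_le_of_abs_le hf p)

lemma osc_eq_abs_of_eqOn {q : ℤ × ℤ} {c : ℝ} (hq : (μ (dI q)).toReal ≠ 0)
    (hmean : avg μ f (dI (par q)) = 0) (hf : Set.EqOn f (fun _ => c) (dI q)) :
    osc μ f q = |c| := by
  have hint : ∫ x in dI q, (f x - avg μ f (dI (par q))) ^ 2 ∂μ = ∫ _ in dI q, c ^ 2 ∂μ :=
    setIntegral_congr_fun (measurableSet_dI q) fun x hx => by simp [hmean, hf hx]
  rw [osc, hint, setIntegral_const, smul_eq_mul, measureReal_def, inv_mul_cancel_left₀ hq,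
    Real.sqrt_sq_eq_abs]

end Averages

namespace posFin

variable {μ : Measure ℝ}

lemma toReal_pos (hμ : posFin μ) (p : ℤ × ℤ) : 0 < (μ (dI p)).toReal :=
  ENNReal.toReal_pos (hμ p).1.ne' (hμ p).2.ne

lemma mval_pos (hμ : posFin μ) (p : ℤ × ℤ) : 0 < mval μ p :=
  lt_min (hμ.toReal_pos _) (hμ.toReal_pos _)

lemma toReal_eq_add (hμ : posFin μ) (p : ℤ × ℤ) :
    (μ (dI p)).toReal = (μ (dI (leftCh p))).toReal + (μ (dI (rightCh p))).toReal := by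
  rw [← dI_leftCh_union_dI_rightCh p,
    measure_union (disjoint_dI_leftCh_dI_rightCh p) (measurableSet_dI _),
    ENNReal.toReal_add (hμ (leftCh p)).2.ne (hμ (rightCh p)).2.ne]

end posFin

lemma setIntegral_indicator_inv_toReal {μ : Measure ℝ} {L J : Set ℝ} (hL : MeasurableSet L)
    (hLJ : L ⊆ J) (hμL : (μ L).toReal ≠ 0) :
    ∫ x in J, L.indicator (fun _ => ((μ L).toReal)⁻¹) x ∂μ = 1 := by
  rw [setIntegral_indicator hL, Set.inter_eq_self_of_subset_right hLJ, setIntegral_const,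
    smul_eq_mul, measureReal_def, mul_inv_cancel₀ hμL]

section Haar

variable {μ : Measure ℝ} {p : ℤ × ℤ}

def haarCoeff (μ : Measure ℝ) (p : ℤ × ℤ) : ℝ :=
  √((μ (dI (leftCh p))).toReal * (μ (dI (rightCh p))).toReal / (μ (dI p)).toReal)

lemma haarCoeff_nonneg : 0 ≤ haarCoeff μ p := Real.sqrt_nonneg _

lemma haarCoeff_le_sqrt_mval (hμ : posFin μ) : haarCoeff μ p ≤ √(mval μ p) := by
  rw [haarCoeff, hμ.toReal_eq_add p]
  exact Real.sqrt_le_sqrt (mul_div_add_le_min (hμ.toReal_pos _) (hμ.toReal_pos _))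

lemma sqrt_mval_div_two_le_haarCoeff (hμ : posFin μ) : √(mval μ p) / 2 ≤ haarCoeff μ p := by
  have hm := hμ.mval_pos p
  have hmin := min_div_two_le_mul_div_add (hμ.toReal_pos (leftCh p)) (hμ.toReal_pos (rightCh p))
  rw [haarCoeff, Real.le_sqrt (by positivity) (by positivity), div_pow, Real.sq_sqrt hm.le,
    hμ.toReal_eq_add p]
  rw [← mval] at hmin
  linarith

lemma haar_eqOn_dI_leftCh :
    Set.EqOn (haar μ p) (fun _ => haarCoeff μ p * ((μ (dI (leftCh p))).toReal)⁻¹)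
      (dI (leftCh p)) := fun x hx => by
  have hx' : x ∉ dI (rightCh p) := (disjoint_dI_leftCh_dI_rightCh p).notMem_of_mem_left hx
  simp [haar, haarCoeff, hx, hx']

lemma haar_eqOn_dI_rightCh :
    Set.EqOn (haar μ p) (fun _ => -(haarCoeff μ p * ((μ (dI (rightCh p))).toReal)⁻¹))
      (dI (rightCh p)) := fun x hx => by
  have hx' : x ∉ dI (leftCh p) := (disjoint_dI_leftCh_dI_rightCh p).notMem_of_mem_right hx
  simp [haar, haarCoeff, hx, hx']

lemma abs_haar_le (hμ : posFin μ) (x : ℝ) : |haar μ p x| ≤ (√(mval μ p))⁻¹ := by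
  have hm := hμ.mval_pos p
  have hc : 0 ≤ haarCoeff μ p := haarCoeff_nonneg
  have hbound : |haar μ p x| ≤ haarCoeff μ p * (mval μ p)⁻¹ := by
    by_cases hL : x ∈ dI (leftCh p)
    · rw [haar_eqOn_dI_leftCh hL, abs_of_nonneg (by positivity)]
      exact mul_le_mul_of_nonneg_left (inv_anti₀ hm (min_le_left _ _)) hc
    by_cases hR : x ∈ dI (rightCh p)
    · rw [haar_eqOn_dI_rightCh hR, abs_neg, abs_of_nonneg (by positivity)]
      exact mul_le_mul_of_nonneg_left (inv_anti₀ hm (min_le_right _ _)) hc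
    simp only [haar, Set.indicator_of_notMem hL, Set.indicator_of_notMem hR, sub_zero,
      mul_zero, abs_zero]
    positivity
  calc |haar μ p x| ≤ haarCoeff μ p * (mval μ p)⁻¹ := hbound
    _ ≤ √(mval μ p) * (mval μ p)⁻¹ := by gcongr; exact haarCoeff_le_sqrt_mval hμ
    _ = (√(mval μ p))⁻¹ := by rw [← div_eq_mul_inv, Real.sqrt_div_self]

lemma avg_haar_self (hμ : posFin μ) : avg μ (haar μ p) (dI p) = 0 := by
  have hint : ∀ q, IntegrableOn
      ((dI q).indicator fun _ => ((μ (dI q)).toReal)⁻¹) (dI p) μ := fun q =>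
    (integrableOn_const (hμ p).2.ne).indicator (measurableSet_dI q)
  have hzero : ∫ x in dI p, haar μ p x ∂μ = 0 := by
    simp only [haar]
    rw [integral_const_mul, integral_sub (hint _) (hint _),
      setIntegral_indicator_inv_toReal (measurableSet_dI _) (dI_leftCh_subset p)
        (hμ.toReal_pos _).ne',
      setIntegral_indicator_inv_toReal (measurableSet_dI _) (dI_rightCh_subset p)
        (hμ.toReal_pos _).ne', sub_self, mul_zero]
  rw [avg, hzero, zero_div]

lemma osc_haar_leftCh (hμ : posFin μ) :
    osc μ (haar μ p) (leftCh p) = haarCoeff μ p * ((μ (dI (leftCh p))).toReal)⁻¹ := by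
  rw [osc_eq_abs_of_eqOn (hμ.toReal_pos _).ne' (by rw [par_leftCh, avg_haar_self hμ])
    haar_eqOn_dI_leftCh, abs_of_nonneg (mul_nonneg haarCoeff_nonneg
      (inv_nonneg.2 ENNReal.toReal_nonneg))]

lemma osc_haar_rightCh (hμ : posFin μ) :
    osc μ (haar μ p) (rightCh p) = haarCoeff μ p * ((μ (dI (rightCh p))).toReal)⁻¹ := by
  rw [osc_eq_abs_of_eqOn (hμ.toReal_pos _).ne' (by rw [par_rightCh, avg_haar_self hμ])
    haar_eqOn_dI_rightCh, abs_neg, abs_of_nonneg (mul_nonneg haarCoeff_nonneg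
      (inv_nonneg.2 ENNReal.toReal_nonneg))]

lemma exists_osc_haar_eq (hμ : posFin μ) :
    ∃ q, osc μ (haar μ p) q = haarCoeff μ p * (mval μ p)⁻¹ := by
  rcases le_total (μ (dI (leftCh p))).toReal (μ (dI (rightCh p))).toReal with h | h
  · exact ⟨leftCh p, by rw [osc_haar_leftCh hμ, mval, min_eq_left h]⟩
  · exact ⟨rightCh p, by rw [osc_haar_rightCh hμ, mval, min_eq_right h]⟩

lemma bmoNorm_haar_le (hμ : posFin μ) :
    bmoNorm μ (haar μ p) ≤ ENNReal.ofReal (2 * (√(mval μ p))⁻¹) :=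
  bmoNorm_le_of_abs_le (abs_haar_le hμ)

lemma le_bmoNorm_haar (hμ : posFin μ) :
    ENNReal.ofReal (2⁻¹ * (√(mval μ p))⁻¹) ≤ bmoNorm μ (haar μ p) := by
  obtain ⟨q, hq⟩ := exists_osc_haar_eq (μ := μ) (p := p) hμ
  have hm := hμ.mval_pos p
  refine le_trans (ENNReal.ofReal_le_ofReal ?_) (ofReal_osc_le_bmoNorm _ q)
  calc 2⁻¹ * (√(mval μ p))⁻¹ = √(mval μ p) / 2 * (mval μ p)⁻¹ := by
        rw [← Real.sqrt_div_self, div_eq_mul_inv, div_eq_mul_inv]; ring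
    _ ≤ osc μ (haar μ p) q := by
        rw [hq]; gcongr; exact sqrt_mval_div_two_le_haarCoeff hμ

end Haar

lemma le_mul_mval_of_bmoNorm_haar_le {μ : Measure ℝ} (hμ : posFin μ) {A : ℝ} (hA : 0 ≤ A)
    {p q : ℤ × ℤ} (h : bmoNorm μ (haar μ q) ≤ ENNReal.ofReal A * bmoNorm μ (haar μ p)) :
    mval μ p ≤ 16 * A ^ 2 * mval μ q := by
  have hx := Real.sqrt_pos.2 (hμ.mval_pos p)
  have hy := Real.sqrt_pos.2 (hμ.mval_pos q)
  have hchain : 2⁻¹ * (√(mval μ q))⁻¹ ≤ A * (2 * (√(mval μ p))⁻¹) := by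
    rw [← ENNReal.ofReal_le_ofReal_iff (by positivity), ENNReal.ofReal_mul hA]
    exact (le_bmoNorm_haar hμ).trans (h.trans (mul_le_mul_right (bmoNorm_haar_le hμ) _))
  have hsqrt : √(mval μ p) ≤ 4 * A * √(mval μ q) := by
    field_simp at hchain
    linarith
  calc mval μ p = √(mval μ p) ^ 2 := (Real.sq_sqrt (hμ.mval_pos p).le).symm
    _ ≤ (4 * A * √(mval μ q)) ^ 2 := by gcongr
    _ = 16 * A ^ 2 * mval μ q := by rw [mul_pow, Real.sq_sqrt (hμ.mval_pos q).le]; ring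

/-- If all the elementary dyadic shifts `h_I ↦ h_{I₋}`, `h_I ↦ h_{I₊}`,
`h_I ↦ h_{Î}` are uniformly bounded on `BMO(μ)`, then `μ` is balanced:
`m(I) ∼ m(Î)` uniformly. The key computation is `‖h_I‖_{BMO(μ)} ∼ m(I)^{-1/2}`. -/
theorem bmo_shift_bound_implies_balanced (μ : Measure ℝ) (hμ : posFin μ)
    (A : ℝ) (hA : 0 < A)
    (hshift : ∀ p : ℤ × ℤ,
      bmoNorm μ (haar μ (leftCh p)) ≤ ENNReal.ofReal A * bmoNorm μ (haar μ p) ∧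
      bmoNorm μ (haar μ (rightCh p)) ≤ ENNReal.ofReal A * bmoNorm μ (haar μ p) ∧
      bmoNorm μ (haar μ (par p)) ≤ ENNReal.ofReal A * bmoNorm μ (haar μ p)) :
    (∃ B : ℝ, 0 < B ∧ ∀ p : ℤ × ℤ,
      mval μ p ≤ B * mval μ (par p) ∧ mval μ (par p) ≤ B * mval μ p) ∧
    (∃ c : ℝ, 0 < c ∧ ∀ p : ℤ × ℤ,
      ENNReal.ofReal (c⁻¹ * (Real.sqrt (mval μ p))⁻¹) ≤ bmoNorm μ (haar μ p) ∧
      bmoNorm μ (haar μ p) ≤ ENNReal.ofReal (c * (Real.sqrt (mval μ p))⁻¹)) := by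
  have hchild : ∀ p, bmoNorm μ (haar μ p) ≤ ENNReal.ofReal A * bmoNorm μ (haar μ (par p)) := by
    intro p
    rcases eq_leftCh_par_or_eq_rightCh_par p with h | h
    · simpa only [← h] using (hshift (par p)).1
    · simpa only [← h] using (hshift (par p)).2.1
  refine ⟨⟨16 * A ^ 2, by positivity, fun p => ⟨?_, ?_⟩⟩,
    ⟨2, two_pos, fun p => ⟨le_bmoNorm_haar hμ, bmoNorm_haar_le hμ⟩⟩⟩
  · exact le_mul_mval_of_bmoNorm_haar_le hμ hA.le (hshift p).2.2
  · exact le_mul_mval_of_bmoNorm_haar_le hμ hA.le (hchild p)
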